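/- Let E = ℓ∞(ℕ) and let S be the right shift operator on E. For m ≠ n, the operators S^m and S^n are disjoint in the order bounded operators on E, i.e., S^m ∧ S^n = 0. -/

import Mathlib

variable (E : Type*) [AddCommGroup E] [Lattice E] [Module ℝ E]
  [CovariantClass E E (· + ·) (· ≤ ·)] [PosSMulMono ℝ E]

/-- The order on order bounded operators: `A ≤ B` iff `A x ≤ B x` for all `x ≥ 0`. -/
def opLE (A B : E →ₗ[ℝ] E) : Prop := ∀ x : E, 0 ≤ x → A x ≤ B x

/-- An operator is order bounded when it maps order bounded sets to order bounded sets. -/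
def IsOrderBoundedOp (T : E →ₗ[ℝ] E) : Prop :=
  ∀ a b : E, ∃ c d : E, ∀ x : E, a ≤ x → x ≤ b → c ≤ T x ∧ T x ≤ d

/-- Band preserving: `T x` lies in the band generated by `x`; equivalently `T x ⊥ y`
whenever `x ⊥ y`. -/
def IsBandPreserving (T : E →ₗ[ℝ] E) : Prop :=
  ∀ x y : E, |x| ⊓ |y| = 0 → |T x| ⊓ |y| = 0

/-- An orthomorphism is an order bounded band preserving linear operator. -/
def IsOrthomorphism (T : E →ₗ[ℝ] E) : Prop :=
  IsOrderBoundedOp E T ∧ IsBandPreserving E T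

/-- Membership in the band generated by a set `S` (in an Archimedean vector lattice this is
the double disjoint complement of `S`). -/
def memBandGen (S : Set E) (w : E) : Prop :=
  ∀ u : E, (∀ s ∈ S, |u| ⊓ |s| = 0) → |u| ⊓ |w| = 0

/-- `P` is the band projection onto the band `B`: it maps into `B` and `x - P x` is
disjoint from `B` for every `x`. -/
def IsBandProjectionOnto (B : Set E) (P : E →ₗ[ℝ] E) : Prop :=
  (∀ x : E, P x ∈ B) ∧ (∀ x : E, ∀ b ∈ B, |x - P x| ⊓ |b| = 0)

/-- Order convergence of a net: there is a downward directed set `D` with infimum `0`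
such that the net is eventually dominated by every member of `D`. -/
def OrderConvNet {ι : Type*} [Preorder ι] (y : ι → E) (l : E) : Prop :=
  ∃ D : Set E, D.Nonempty ∧ DirectedOn (· ≥ ·) D ∧ IsGLB D 0 ∧
    ∀ d ∈ D, ∃ i₀ : ι, ∀ i : ι, i₀ ≤ i → |y i - l| ≤ d

/-- Unbounded order convergence of a net. -/
def UOConvNet {ι : Type*} [Preorder ι] (y : ι → E) (l : E) : Prop :=
  ∀ u : E, 0 ≤ u → OrderConvNet E (fun i => |y i - l| ⊓ u) 0

/-- Order convergence of a net of operators, in the operator order of the order bounded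
operators: there is a downward directed set `D` of operators whose infimum among the
order bounded operators is `0`, eventually dominating `|T i - L|`. -/
def OpOrderConvNet {ι : Type*} [Preorder ι] (T : ι → E →ₗ[ℝ] E) (L : E →ₗ[ℝ] E) : Prop :=
  ∃ D : Set (E →ₗ[ℝ] E), D.Nonempty ∧
    DirectedOn (fun A B => opLE E B A) D ∧
    (∀ d ∈ D, opLE E 0 d) ∧
    (∀ C : E →ₗ[ℝ] E, IsOrderBoundedOp E C → (∀ d ∈ D, opLE E C d) → opLE E C 0) ∧
    ∀ d ∈ D, ∃ i₀ : ι, ∀ i : ι, i₀ ≤ i → opLE E (L - T i) d ∧ opLE E (T i - L) d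


/-- `ℓ∞(ℕ)`, realized as the bounded (automatically continuous) functions `ℕ → ℝ`. -/
abbrev LinfN := BoundedContinuousFunction ℕ ℝ

/-! Let `U ≤ S ^ m, S ^ n`, `x ≥ 0` and fix a coordinate `k`. If `k < m` then
`(U x) k ≤ ((S ^ m) x) k = 0`. Otherwise split `x = y + z`, with `z` the part of `x` at
coordinate `k - m`: then `(U x) k ≤ ((S ^ m) y) k + ((S ^ n) z) k = 0`, because `S ^ m` reads
`y` at `k - m`, where it vanishes, while `S ^ n` reads `z` elsewhere. -/

lemma opLE.map_add_le {V : Type*} [AddCommGroup V] [Lattice V] [Module ℝ V] [AddLeftMono V]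
    {U A B : V →ₗ[ℝ] V} (hA : opLE V U A) (hB : opLE V U B) {y z : V} (hy : 0 ≤ y)
    (hz : 0 ≤ z) : U (y + z) ≤ A y + B z := by
  rw [map_add]
  exact add_le_add (hA y hy) (hB z hz)

namespace LinfN

open BoundedContinuousFunction

lemma le_def {x y : LinfN} : x ≤ y ↔ ∀ k, x k ≤ y k := Iff.rfl

lemma shift_pow_apply {S : LinfN →ₗ[ℝ] LinfN}
    (hS : ∀ x : LinfN, (S x) 0 = 0 ∧ ∀ k : ℕ, (S x) (k + 1) = x k) (m : ℕ) (x : LinfN)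
    (k : ℕ) : (S ^ m) x k = if m ≤ k then x (k - m) else 0 := by
  induction m generalizing k with
  | zero => simp
  | succ m ih =>
    rw [pow_succ', Module.End.mul_apply]
    cases k with
    | zero => simp [(hS _).1]
    | succ k => simp [(hS _).2, ih]

lemma shift_pow_nonneg {S : LinfN →ₗ[ℝ] LinfN}
    (hS : ∀ x : LinfN, (S x) 0 = 0 ∧ ∀ k : ℕ, (S x) (k + 1) = x k) (m : ℕ) :
    opLE LinfN 0 (S ^ m) := fun x hx => le_def.2 fun k => by
  rw [LinearMap.zero_apply, coe_zero, Pi.zero_apply, shift_pow_apply hS]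
  split_ifs
  exacts [le_def.1 hx _, le_rfl]

lemma apply_le_zero_of_opLE_shift_pow {S : LinfN →ₗ[ℝ] LinfN}
    (hS : ∀ x : LinfN, (S x) 0 = 0 ∧ ∀ k : ℕ, (S x) (k + 1) = x k) {m n : ℕ} (hmn : m ≠ n)
    {U : LinfN →ₗ[ℝ] LinfN} (hUm : opLE LinfN U (S ^ m)) (hUn : opLE LinfN U (S ^ n))
    {x : LinfN} (hx : 0 ≤ x) (k : ℕ) : U x k ≤ 0 := by
  by_cases hmk : m ≤ k
  · set z : LinfN := x (k - m) • indicator {k - m} (isClopen_discrete _)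
    have hz_apply (j : ℕ) : z j = if j = k - m then x (k - m) else 0 := by
      by_cases hj : j = k - m <;> simp [z, hj]
    have hz : 0 ≤ z := le_def.2 fun j => by
      rw [coe_zero, Pi.zero_apply, hz_apply]
      split_ifs
      exacts [le_def.1 hx _, le_rfl]
    have hy : 0 ≤ x - z := le_def.2 fun j => by
      simp only [coe_zero, Pi.zero_apply, coe_sub, Pi.sub_apply, hz_apply]
      split_ifs with hj
      · simp [hj]
      · simpa using le_def.1 hx j
    calc U x k = U ((x - z) + z) k := by rw [sub_add_cancel]
      _ ≤ ((S ^ m) (x - z) + (S ^ n) z) k := hUm.map_add_le hUn hy hz k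
      _ = 0 := by
        simp only [coe_add, Pi.add_apply, shift_pow_apply hS, coe_sub, Pi.sub_apply, hz_apply]
        split_ifs <;> first | omega | simp
  · calc U x k ≤ (S ^ m) x k := hUm x hx k
      _ = 0 := by rw [shift_pow_apply hS, if_neg hmk]

end LinfN

theorem stmt8 (S : LinfN →ₗ[ℝ] LinfN)
    (hS : ∀ x : LinfN, (S x) 0 = 0 ∧ ∀ k : ℕ, (S x) (k + 1) = x k)
    (m n : ℕ) (hmn : m ≠ n) :
    opLE LinfN 0 (S ^ m) ∧ opLE LinfN 0 (S ^ n) ∧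
      ∀ U : LinfN →ₗ[ℝ] LinfN, IsOrderBoundedOp LinfN U →
        opLE LinfN U (S ^ m) → opLE LinfN U (S ^ n) → opLE LinfN U 0 :=
  ⟨LinfN.shift_pow_nonneg hS m, LinfN.shift_pow_nonneg hS n,
    fun _ _ hUm hUn _ hx k => LinfN.apply_le_zero_of_opLE_shift_pow hS hmn hUm hUn hx k⟩
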